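/- arXiv:2412.12123 — 4 statements merged into one kernel-verified Lean document; each statement's English description precedes it below -/
import Mathlib

section
/- Let W be an n×n real matrix and λ > 0. If the Frobenius norm of W satisfies ‖W‖_F < 4/λ, then the map G : ℝⁿ → ℝⁿ defined componentwise by G(A)_i = 1/(1 + exp(-λ (W A)_i)) is a contraction with respect to the Euclidean metric, with contraction constant (λ/4)‖W‖_F < 1. -/
/-! The logistic function `t ↦ 1 / (1 + exp (-l t))` has derivative `l e / (1 + e) ^ 2` with
`e = exp (-l t)`, and `(1 + e) ^ 2 ≥ 4 e` by AM-GM, so it is `|l| / 4`-Lipschitz. Applying it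
componentwise after `W` and bounding each row of `W (A - A')` by Cauchy–Schwarz gives the
Lipschitz constant `(l / 4) ‖W‖_F`, which is `< 1` exactly when `‖W‖_F < 4 / l`. -/

open Matrix

noncomputable def logistic (l t : ℝ) : ℝ := 1 / (1 + Real.exp (-l * t))

theorem hasDerivAt_logistic (l t : ℝ) :
    HasDerivAt (logistic l) (l * Real.exp (-l * t) / (1 + Real.exp (-l * t)) ^ 2) t := by
  have hlin : HasDerivAt (fun t : ℝ => -l * t) (-l) t := by
    simpa using (hasDerivAt_id t).const_mul (-l)
  have hne : 1 + Real.exp (-l * t) ≠ 0 := by positivity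
  have hfun : logistic l = fun s => (1 + Real.exp (-l * s))⁻¹ := funext fun s => one_div _
  rw [hfun]
  exact (((hlin.exp).const_add 1).inv hne).congr_deriv (by ring)

theorem abs_deriv_logistic_le (l t : ℝ) :
    |l * Real.exp (-l * t) / (1 + Real.exp (-l * t)) ^ 2| ≤ |l| / 4 := by
  set e := Real.exp (-l * t)
  have he : 0 < e := Real.exp_pos _
  have hamgm : 4 * e ≤ (1 + e) ^ 2 := by nlinarith [sq_nonneg (1 - e)]
  have hden : 0 < (1 + e) ^ 2 := by positivity
  rw [abs_div, abs_mul, abs_of_pos he, abs_of_pos hden, div_le_iff₀ hden]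
  nlinarith [abs_nonneg l]

theorem abs_logistic_sub_le (l a b : ℝ) :
    |logistic l a - logistic l b| ≤ |l| / 4 * |a - b| := by
  simpa [Real.norm_eq_abs] using Convex.norm_image_sub_le_of_norm_deriv_le
    (fun t _ => (hasDerivAt_logistic l t).differentiableAt)
    (fun t _ => (hasDerivAt_logistic l t).deriv ▸ abs_deriv_logistic_le l t)
    convex_univ (Set.mem_univ b) (Set.mem_univ a)

theorem sum_sq_mulVec_le {m n : Type*} [Fintype m] [Fintype n] (W : Matrix m n ℝ) (x : n → ℝ) :
    ∑ i, (W *ᵥ x) i ^ 2 ≤ (∑ i, ∑ j, W i j ^ 2) * ∑ j, x j ^ 2 := by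
  rw [Finset.sum_mul]
  exact Finset.sum_le_sum fun i _ => Finset.sum_mul_sq_le_sq_mul_sq _ _ _

theorem sigmoid_fcm_contraction (n : ℕ) (l : ℝ) (hl : 0 < l)
    (W : Matrix (Fin n) (Fin n) ℝ)
    (hW : Real.sqrt (∑ i, ∑ j, (W i j) ^ 2) < 4 / l)
    (G : (Fin n → ℝ) → (Fin n → ℝ))
    (hG : ∀ A i, G A i = 1 / (1 + Real.exp (-l * ∑ j, W i j * A j))) :
    (l / 4 * Real.sqrt (∑ i, ∑ j, (W i j) ^ 2) < 1) ∧
    ∀ A A' : Fin n → ℝ,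
      Real.sqrt (∑ i, (G A i - G A' i) ^ 2) ≤
        (l / 4 * Real.sqrt (∑ i, ∑ j, (W i j) ^ 2)) *
          Real.sqrt (∑ i, (A i - A' i) ^ 2) := by
  refine ⟨by linarith [(lt_div_iff₀ hl).mp hW], fun A A' => ?_⟩
  have hGW : ∀ A, G A = fun i => logistic l ((W *ᵥ A) i) := fun A => funext (hG A)
  have hpoint : ∀ i, (G A i - G A' i) ^ 2 ≤ (l / 4) ^ 2 * (W *ᵥ (A - A')) i ^ 2 := fun i => by
    rw [← mul_pow, sq_le_sq, mulVec_sub, hGW, hGW, Pi.sub_apply]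
    exact (abs_logistic_sub_le l _ _).trans_eq (by rw [abs_mul, abs_div, abs_of_pos (four_pos : (0 : ℝ) < 4)])
  calc √(∑ i, (G A i - G A' i) ^ 2)
      ≤ √((l / 4) ^ 2 * ∑ i, (W *ᵥ (A - A')) i ^ 2) := by
        rw [Finset.mul_sum]
        exact Real.sqrt_le_sqrt (Finset.sum_le_sum fun i _ => hpoint i)
    _ ≤ √((l / 4) ^ 2 * ((∑ i, ∑ j, W i j ^ 2) * ∑ j, (A - A') j ^ 2)) := by
        gcongr
        exact sum_sq_mulVec_le W _
    _ = _ := by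
        rw [Real.sqrt_mul (by positivity), Real.sqrt_mul (by positivity),
          Real.sqrt_sq (by positivity), mul_assoc]
        rfl
end

section
/- Let W be an n×n real matrix and λ > 0 with ‖W‖_F < 4/λ. Then the sigmoid FCM update map G(A)_i = 1/(1 + exp(-λ ∑_j w_{ij} A_j)) has a unique fixed point in ℝⁿ, and for any initial vector A⁰ the iterates A^{t+1} = G(A^t) converge to this fixed point. -/
/-!
The sigmoid has derivative `σ(1 - σ) ≤ 1/4`, so it is `1/4`-Lipschitz, and by Cauchy–Schwarz
`x ↦ λ W x` is `λ‖W‖_F`-Lipschitz for the Euclidean norm. Hence the update map is a contraction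
with constant `λ‖W‖_F / 4 < 1` on the complete space `ℝⁿ`, and Banach's fixed point theorem gives
the unique fixed point and the convergence of every orbit.
-/

open Filter Topology WithLp Matrix

theorem Real.lipschitzWith_sigmoid : LipschitzWith 4⁻¹ Real.sigmoid := by
  refine lipschitzWith_of_nnnorm_deriv_le (fun _ => differentiableAt_sigmoid) fun x => ?_
  have hσ := Real.sigmoid_pos x
  have hσ1 := Real.sigmoid_lt_one x
  rw [Real.deriv_sigmoid, ← NNReal.coe_le_coe, coe_nnnorm, Real.norm_of_nonneg (by nlinarith)]
  push_cast
  nlinarith [sq_nonneg (Real.sigmoid x - 2⁻¹)]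

theorem PiLp.lipschitzWith_map_of_L2 {ι : Type*} [Fintype ι] {β γ : ι → Type*}
    [∀ i, SeminormedAddCommGroup (β i)] [∀ i, SeminormedAddCommGroup (γ i)] {K : NNReal}
    {φ : ∀ i, β i → γ i} (hφ : ∀ i, LipschitzWith K (φ i)) :
    LipschitzWith K (fun x : PiLp 2 β => toLp 2 fun i => φ i (x i)) := by
  refine LipschitzWith.of_dist_le_mul fun x y => ?_
  rw [PiLp.dist_eq_of_L2, PiLp.dist_eq_of_L2]
  calc √(∑ i, dist (φ i (x i)) (φ i (y i)) ^ 2) ≤ √(∑ i, (K * dist (x i) (y i)) ^ 2) := by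
        gcongr with i
        exact (hφ i).dist_le_mul _ _
    _ = K * √(∑ i, dist (x i) (y i) ^ 2) := by
        simp_rw [mul_pow, ← Finset.mul_sum]
        rw [Real.sqrt_mul (by positivity), Real.sqrt_sq K.coe_nonneg]

open scoped Matrix.Norms.Frobenius in
theorem Matrix.frobenius_norm_mulVec_le {𝕜 m n : Type*} [RCLike 𝕜] [Fintype m] [Fintype n]
    (A : Matrix m n 𝕜) (v : n → 𝕜) : ‖toLp 2 (A *ᵥ v)‖ ≤ ‖A‖ * ‖toLp 2 v‖ := by
  simpa only [← frobenius_norm_replicateCol (ι := Unit), replicateCol_mulVec]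
    using frobenius_norm_mul A (replicateCol Unit v)

open scoped Matrix.Norms.Frobenius in
theorem Matrix.lipschitzWith_frobenius_mulVec {𝕜 m n : Type*} [RCLike 𝕜] [Fintype m] [Fintype n]
    (A : Matrix m n 𝕜) :
    LipschitzWith ‖A‖₊ (fun x : EuclideanSpace 𝕜 n => toLp 2 (A *ᵥ ofLp x)) := by
  refine LipschitzWith.of_dist_le_mul fun x y => ?_
  simp only [dist_eq_norm, ← WithLp.toLp_sub, ← mulVec_sub, coe_nnnorm]
  exact A.frobenius_norm_mulVec_le _

open scoped Matrix.Norms.Frobenius in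
theorem Matrix.frobenius_norm_eq_sqrt_sum_sq {m n : Type*} [Fintype m] [Fintype n]
    (A : Matrix m n ℝ) : ‖A‖ = √(∑ i, ∑ j, A i j ^ 2) := by
  simp [frobenius_norm_def, Real.sqrt_eq_rpow]

theorem ContractingWith.exists_unique_fixedPt_tendsto_of_semiconj {α β : Type*} [MetricSpace α]
    [CompleteSpace α] [Nonempty α] [TopologicalSpace β] {K : NNReal} {F : α → α} {G : β → β}
    (hF : ContractingWith K F) (e : α ≃ₜ β) (he : Function.Semiconj e F G) :
    ∃ b, G b = b ∧ (∀ c, G c = c → c = b) ∧ ∀ b₀, Tendsto (fun t => G^[t] b₀) atTop (𝓝 b) := by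
  refine ⟨e (fixedPoint F hF), ?_, fun c hc => ?_, fun b₀ => ?_⟩
  · rw [← he, hF.fixedPoint_isFixedPt]
  · have hfix : F (e.symm c) = e.symm c := e.injective (by rw [he, e.apply_symm_apply, hc])
    rw [← hF.fixedPoint_unique hfix, e.apply_symm_apply]
  · have hit (t : ℕ) : G^[t] b₀ = e (F^[t] (e.symm b₀)) := by
      rw [(he.iterate_right t).eq, e.apply_symm_apply]
    simp only [hit]
    exact (e.continuous.tendsto _).comp (hF.tendsto_iterate_fixedPoint (e.symm b₀))

open scoped Matrix.Norms.Frobenius in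
theorem sigmoid_fcm_unique_fixed_point (n : ℕ) (l : ℝ) (hl : 0 < l)
    (W : Matrix (Fin n) (Fin n) ℝ)
    (hW : Real.sqrt (∑ i, ∑ j, (W i j) ^ 2) < 4 / l)
    (G : (Fin n → ℝ) → (Fin n → ℝ))
    (hG : ∀ A i, G A i = 1 / (1 + Real.exp (-l * ∑ j, W i j * A j))) :
    ∃ Astar : Fin n → ℝ, G Astar = Astar ∧
      (∀ B : Fin n → ℝ, G B = B → B = Astar) ∧
      ∀ A0 : Fin n → ℝ,
        Filter.Tendsto (fun t => G^[t] A0) Filter.atTop (nhds Astar) := by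
  -- `Fin n → ℝ` carries the sup metric; the contraction estimate needs the Euclidean one.
  let F (x : EuclideanSpace ℝ (Fin n)) : EuclideanSpace ℝ (Fin n) :=
    toLp 2 fun i => Real.sigmoid (((l • W) *ᵥ ofLp x) i)
  have hFG : Function.Semiconj (PiLp.homeomorph 2 _) F G := fun x => by
    change ofLp (F x) = G (ofLp x)
    funext i
    simp [F, hG, Real.sigmoid, one_div, mulVec, dotProduct, Finset.mul_sum, mul_assoc]
  have hK : 4⁻¹ * ‖l • W‖₊ < 1 := by
    rw [← NNReal.coe_lt_coe, NNReal.coe_mul, coe_nnnorm, norm_smul,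
      W.frobenius_norm_eq_sqrt_sum_sq, Real.norm_of_nonneg hl.le]
    rw [lt_div_iff₀ hl] at hW
    push_cast
    linarith
  have hF : ContractingWith (4⁻¹ * ‖l • W‖₊) F :=
    ⟨hK, ((PiLp.lipschitzWith_map_of_L2 fun _ => Real.lipschitzWith_sigmoid).comp
      (l • W).lipschitzWith_frobenius_mulVec :)⟩
  exact hF.exists_unique_fixedPt_tendsto_of_semiconj _ hFG
end

section
/- Let C be a nonempty closed bounded convex subset of a uniformly convex Banach space X and U : C → C a nonexpansive mapping (‖Ux - Uy‖ ≤ ‖x - y‖ for all x, y ∈ C). Then U has at least one fixed point in C. -/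
open Filter Topology

/-- Scaled uniform convexity: a modulus valid at every scale simultaneously. -/
lemma bgk_key {X : Type*} [NormedAddCommGroup X] [NormedSpace ℝ X]
    [UniformConvexSpace X] {ε : ℝ} (hε : 0 < ε) :
    ∃ δ : ℝ, 0 < δ ∧ δ ≤ 1 ∧ ∀ a b : X,
      ε * max ‖a‖ ‖b‖ ≤ ‖a - b‖ → ‖a + b‖ ≤ (2 - δ) * max ‖a‖ ‖b‖ := by
  obtain ⟨δ, hδ, h⟩ := exists_forall_closed_ball_dist_add_le_two_sub X hε
  refine ⟨min δ 1, lt_min hδ one_pos, min_le_right _ _, fun a b hab => ?_⟩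
  set m := max ‖a‖ ‖b‖ with hm
  have hm0 : 0 ≤ m := le_trans (norm_nonneg a) (le_max_left _ _)
  rcases eq_or_lt_of_le hm0 with h0 | h0
  · have ha : ‖a‖ = 0 := le_antisymm (h0 ▸ le_max_left _ _) (norm_nonneg _)
    have hb : ‖b‖ = 0 := le_antisymm (h0 ▸ le_max_right _ _) (norm_nonneg _)
    have ha' : a = 0 := norm_eq_zero.mp ha
    have hb' : b = 0 := norm_eq_zero.mp hb
    simp [ha', hb', ← h0]
  · have hminv : 0 < m⁻¹ := inv_pos.mpr h0
    have ha1 : ‖m⁻¹ • a‖ ≤ 1 := by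
      rw [norm_smul, Real.norm_eq_abs, abs_of_pos hminv]
      calc m⁻¹ * ‖a‖ ≤ m⁻¹ * m := by
            exact mul_le_mul_of_nonneg_left (le_max_left _ _) hminv.le
        _ = 1 := inv_mul_cancel₀ h0.ne'
    have hb1 : ‖m⁻¹ • b‖ ≤ 1 := by
      rw [norm_smul, Real.norm_eq_abs, abs_of_pos hminv]
      calc m⁻¹ * ‖b‖ ≤ m⁻¹ * m := by
            exact mul_le_mul_of_nonneg_left (le_max_right _ _) hminv.le
        _ = 1 := inv_mul_cancel₀ h0.ne'
    have hdist : ε ≤ ‖m⁻¹ • a - m⁻¹ • b‖ := by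
      rw [← smul_sub, norm_smul, Real.norm_eq_abs, abs_of_pos hminv]
      calc ε = m⁻¹ * (ε * m) := by field_simp
        _ ≤ m⁻¹ * ‖a - b‖ := mul_le_mul_of_nonneg_left hab hminv.le
    have := h ha1 hb1 hdist
    rw [← smul_add, norm_smul, Real.norm_eq_abs, abs_of_pos hminv] at this
    have h2 : ‖a + b‖ ≤ (2 - δ) * m := by
      have h2' := mul_le_mul_of_nonneg_left this h0.le
      rw [← mul_assoc, mul_inv_cancel₀ h0.ne', one_mul] at h2'
      nlinarith
    calc ‖a + b‖ ≤ (2 - δ) * m := h2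
      _ ≤ (2 - min δ 1) * m := by
          apply mul_le_mul_of_nonneg_right _ hm0
          have : min δ 1 ≤ δ := min_le_left _ _
          linarith

theorem browder_gohde_kirk {X : Type*} [NormedAddCommGroup X] [NormedSpace ℝ X]
    [UniformConvexSpace X] [CompleteSpace X]
    (C : Set X) (hne : C.Nonempty) (hclosed : IsClosed C)
    (hbdd : Bornology.IsBounded C) (hconv : Convex ℝ C)
    (U : X → X) (hmaps : Set.MapsTo U C C)
    (hnonexp : ∀ x ∈ C, ∀ y ∈ C, ‖U x - U y‖ ≤ ‖x - y‖) :
    ∃ x ∈ C, U x = x := by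
  classical
  obtain ⟨M, hM⟩ := isBounded_iff_forall_norm_le.mp hbdd
  obtain ⟨x0, hx0⟩ := hne
  have hM0 : 0 ≤ M := le_trans (norm_nonneg x0) (hM x0 hx0)
  -- Step 1: approximate fixed points via Banach contraction
  have : Nonempty C := Set.nonempty_coe_sort.mpr ⟨x0, hx0⟩
  have : CompleteSpace C := hclosed.completeSpace_coe
  have approx : ∀ η : ℝ, 0 < η → ∃ z ∈ C, ‖U z - z‖ ≤ η := by
    intro η hη
    set t : ℝ := η / (2 * M + 1 + η) with ht_def
    have hden : 0 < 2 * M + 1 + η := by linarith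
    have ht0 : 0 < t := div_pos hη hden
    have ht1 : t < 1 := (div_lt_one hden).mpr (by linarith)
    set c : ℝ := 1 - t with hc_def
    have hc0 : 0 ≤ c := by linarith
    have hc1 : c < 1 := by simp only [hc_def]; linarith
    set f : C → C := fun y =>
      ⟨t • x0 + c • U y, hconv hx0 (hmaps y.2) ht0.le hc0 (by ring)⟩ with hf_def
    have hlip : LipschitzWith ⟨c, hc0⟩ f := by
      apply LipschitzWith.of_dist_le_mul
      intro a b
      have h1 : dist (f a) (f b) = ‖c • U (a : X) - c • U (b : X)‖ := by
        rw [Subtype.dist_eq, dist_eq_norm]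
        congr 1
        simp only [hf_def]
        abel
      rw [h1, ← smul_sub, norm_smul, Real.norm_eq_abs, abs_of_nonneg hc0,
        Subtype.dist_eq, dist_eq_norm]
      exact mul_le_mul_of_nonneg_left (hnonexp _ a.2 _ b.2) hc0
    have hcontr : ContractingWith ⟨c, hc0⟩ f := ⟨by exact_mod_cast hc1, hlip⟩
    set z := ContractingWith.fixedPoint f hcontr with hz_def
    have hz : f z = z := hcontr.fixedPoint_isFixedPt
    have hzval : t • x0 + c • U (z : X) = (z : X) := congrArg Subtype.val hz
    refine ⟨z, z.2, ?_⟩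
    set w : X := U (z : X) with hw_def
    have hAB : w - (z : X) = t • (w - x0) := by
      rw [← hzval]
      simp only [hc_def]
      module
    show ‖w - (z : X)‖ ≤ η
    rw [hAB, norm_smul, Real.norm_eq_abs, abs_of_pos ht0]
    have hUz : ‖w - x0‖ ≤ 2 * M + 1 + η := by
      calc ‖w - x0‖ ≤ ‖w‖ + ‖x0‖ := norm_sub_le _ _
        _ ≤ M + M := add_le_add (hM _ (hmaps z.2)) (hM _ hx0)
        _ ≤ 2 * M + 1 + η := by linarith
    calc t * ‖w - x0‖ ≤ t * (2 * M + 1 + η) :=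
          mul_le_mul_of_nonneg_left hUz ht0.le
      _ = η := by rw [ht_def]; field_simp
  have hax : ∀ n : ℕ, ∃ z ∈ C, ‖U z - z‖ ≤ 1 / (n + 1 : ℝ) := fun n =>
    approx _ (by positivity)
  choose x hxC hx using hax
  -- Step 2: ultrafilter extending atTop
  set φ : Ultrafilter ℕ := Ultrafilter.of atTop with hφ_def
  have hφle : (φ : Filter ℕ) ≤ atTop := Ultrafilter.of_le atTop
  -- Step 3: asymptotic radius function
  have hrex : ∀ y : X, ∃ L, Tendsto (fun n => ‖y - x n‖) (φ : Filter ℕ) (𝓝 L) := by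
    intro y
    have hle : (Ultrafilter.map (fun n => ‖y - x n‖) φ : Filter ℝ) ≤
        𝓟 (Set.Icc 0 (‖y‖ + M)) := by
      rw [Ultrafilter.coe_map, le_principal_iff, mem_map]
      apply φ.toFilter.sets_of_superset univ_mem
      intro n _
      refine ⟨norm_nonneg _, ?_⟩
      calc ‖y - x n‖ ≤ ‖y‖ + ‖x n‖ := norm_sub_le _ _
        _ ≤ ‖y‖ + M := by linarith [hM _ (hxC n)]
    obtain ⟨L, _, hL⟩ := isCompact_Icc.ultrafilter_le_nhds _ hle
    exact ⟨L, by rwa [Ultrafilter.coe_map] at hL⟩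
  choose r hr using hrex
  have hrnn : ∀ y : X, 0 ≤ r y :=
    fun y => ge_of_tendsto (hr y) (Eventually.of_forall fun n => norm_nonneg _)
  -- triangle-type inequalities
  have hsum : ∀ y z : X, ‖y - z‖ ≤ r y + r z := by
    intro y z
    refine le_of_tendsto_of_tendsto' tendsto_const_nhds ((hr y).add (hr z)) fun n => ?_
    calc ‖y - z‖ ≤ ‖y - x n‖ + ‖x n - z‖ := norm_sub_le_norm_sub_add_norm_sub _ _ _
      _ = ‖y - x n‖ + ‖z - x n‖ := by rw [norm_sub_rev (x n) z]
  have hlip_r : ∀ y z : X, r y ≤ r z + ‖y - z‖ := by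
    intro y z
    refine le_of_tendsto_of_tendsto' (hr y) (((hr z).add tendsto_const_nhds)) fun n => ?_
    calc ‖y - x n‖ ≤ ‖y - z‖ + ‖z - x n‖ := norm_sub_le_norm_sub_add_norm_sub _ _ _
      _ = ‖z - x n‖ + ‖y - z‖ := by ring
  -- r does not increase under U
  have hinv0 : Tendsto (fun n : ℕ => 1 / (n + 1 : ℝ)) (φ : Filter ℕ) (𝓝 0) :=
    tendsto_one_div_add_atTop_nhds_zero_nat.mono_left hφle
  have hrU : ∀ z ∈ C, r (U z) ≤ r z := by
    intro z hz
    have : Tendsto (fun n => ‖z - x n‖ + 1 / (n + 1 : ℝ)) (φ : Filter ℕ)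
        (𝓝 (r z + 0)) := (hr z).add hinv0
    rw [add_zero] at this
    refine le_of_tendsto_of_tendsto' (hr (U z)) this fun n => ?_
    calc ‖U z - x n‖ ≤ ‖U z - U (x n)‖ + ‖U (x n) - x n‖ :=
          norm_sub_le_norm_sub_add_norm_sub _ _ _
      _ ≤ ‖z - x n‖ + 1 / (n + 1 : ℝ) :=
          add_le_add (hnonexp _ hz _ (hxC n)) (hx n)
  -- Step 4: infimum of r over C
  set S : Set ℝ := r '' C with hS_def
  have hSne : S.Nonempty := ⟨r x0, x0, hx0, rfl⟩
  have hSbdd : BddBelow S := ⟨0, fun a ⟨y, _, hy⟩ => hy ▸ hrnn y⟩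
  set d : ℝ := sInf S with hd_def
  have hd_le : ∀ y ∈ C, d ≤ r y := fun y hy => csInf_le hSbdd ⟨y, hy, rfl⟩
  have hd0 : 0 ≤ d := le_csInf hSne fun a ⟨y, _, hy⟩ => hy ▸ hrnn y
  -- Step 5: the "near-minimizers are close" lemma
  have uniq : ∀ ε : ℝ, 0 < ε → ∃ η : ℝ, 0 < η ∧ ∀ p ∈ C, ∀ q ∈ C,
      r p ≤ d + η → r q ≤ d + η → ‖p - q‖ < ε := by
    intro ε hε
    by_cases hd : d < ε / 4
    · refine ⟨(ε - 2 * d) / 8, by linarith, fun p hp q hq hrp hrq => ?_⟩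
      have := hsum p q
      linarith
    · push_neg at hd
      have hdpos : 0 < d := lt_of_lt_of_le (by linarith) hd
      have hε' : 0 < ε / (d + 1) := div_pos hε (by linarith)
      obtain ⟨δ, hδ0, hδ1, hkey⟩ := bgk_key (X := X) hε'
      refine ⟨min (1/2) (δ * d / 8), lt_min (by norm_num) (by positivity),
        fun p hp q hq hrp hrq => ?_⟩
      set η : ℝ := min (1/2) (δ * d / 8) with hη_def
      have hη2 : η ≤ 1/2 := min_le_left _ _
      have hη8 : η ≤ δ * d / 8 := min_le_right _ _
      have hηpos : 0 < η := lt_min (by norm_num) (by positivity)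
      by_contra hcon
      push_neg at hcon
      -- eventually both distances are ≤ d + 2η
      have hevp : ∀ᶠ n in (φ : Filter ℕ), ‖p - x n‖ < d + 2 * η :=
        Tendsto.eventually_lt_const (by linarith) (hr p)
      have hevq : ∀ᶠ n in (φ : Filter ℕ), ‖q - x n‖ < d + 2 * η :=
        Tendsto.eventually_lt_const (by linarith) (hr q)
      set m : X := (1/2 : ℝ) • p + (1/2 : ℝ) • q with hm_def
      have hmC : m ∈ C := hconv hp hq (by norm_num) (by norm_num) (by norm_num)
      have hev : ∀ᶠ n in (φ : Filter ℕ),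
          ‖m - x n‖ ≤ (2 - δ) * (d + 2 * η) / 2 := by
        filter_upwards [hevp, hevq] with n h1 h2
        have hmax : max ‖p - x n‖ ‖q - x n‖ ≤ d + 2 * η := max_le h1.le h2.le
        have hab : ε / (d + 1) * max ‖p - x n‖ ‖q - x n‖ ≤ ‖p - x n - (q - x n)‖ := by
          have h3 : ‖p - x n - (q - x n)‖ = ‖p - q‖ := by congr 1; abel
          rw [h3]
          calc ε / (d + 1) * max ‖p - x n‖ ‖q - x n‖ ≤ ε / (d + 1) * (d + 1) := by
                apply mul_le_mul_of_nonneg_left _ hε'.le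
                linarith
            _ = ε := by field_simp
            _ ≤ ‖p - q‖ := hcon
        have h4 := hkey (p - x n) (q - x n) hab
        have h5 : p - x n + (q - x n) = (2 : ℝ) • (m - x n) := by
          rw [hm_def]
          module
        rw [h5, norm_smul, Real.norm_eq_abs] at h4
        have h6 : (2 : ℝ) * ‖m - x n‖ ≤ (2 - δ) * (d + 2 * η) := by
          calc (2:ℝ) * ‖m - x n‖ = |(2:ℝ)| * ‖m - x n‖ := by norm_num
            _ ≤ (2 - δ) * max ‖p - x n‖ ‖q - x n‖ := h4
            _ ≤ (2 - δ) * (d + 2 * η) :=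
                mul_le_mul_of_nonneg_left hmax (by linarith)
        linarith
      have hrm : r m ≤ (2 - δ) * (d + 2 * η) / 2 := le_of_tendsto (hr m) hev
      have := hd_le m hmC
      nlinarith [hδ0, hdpos, hη8, hδ1]
  -- Step 6: minimizing sequence
  have hminseq : ∀ k : ℕ, ∃ y ∈ C, r y ≤ d + 1 / (k + 1 : ℝ) := by
    intro k
    have : sInf S < d + 1 / (k + 1 : ℝ) := by
      have : (0:ℝ) < 1 / (k + 1 : ℝ) := by positivity
      rw [← hd_def]; linarith
    obtain ⟨a, ⟨y, hy, rfl⟩, ha⟩ := exists_lt_of_csInf_lt hSne this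
    exact ⟨y, hy, ha.le⟩
  choose y hyC hy using hminseq
  have hcauchy : CauchySeq y := by
    rw [Metric.cauchySeq_iff]
    intro ε hε
    obtain ⟨η, hη, huniq⟩ := uniq ε hε
    obtain ⟨N, hN⟩ := exists_nat_gt (1 / η)
    refine ⟨N, fun j hj k hk => ?_⟩
    have hb : ∀ i : ℕ, N ≤ i → r (y i) ≤ d + η := by
      intro i hi
      refine le_trans (hy i) (by
        have h1 : 1 / (i + 1 : ℝ) ≤ η := by
          rw [div_le_iff₀ (by positivity)]
          have : 1 / η < (i + 1 : ℝ) := by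
            calc 1 / η < (N : ℝ) := hN
              _ ≤ (i : ℝ) := Nat.cast_le.mpr hi
              _ ≤ (i : ℝ) + 1 := by linarith
          rw [div_lt_iff₀ hη] at this
          linarith
        linarith)
    rw [dist_eq_norm]
    exact huniq _ (hyC j) _ (hyC k) (hb j hj) (hb k hk)
  obtain ⟨z, hz⟩ := cauchySeq_tendsto_of_complete hcauchy
  have hzC : z ∈ C := hclosed.mem_of_tendsto hz (Eventually.of_forall hyC)
  -- r z = d
  have hrz_le : r z ≤ d := by
    have htz : Tendsto (fun k : ℕ => d + 1 / ((k : ℝ) + 1) + ‖z - y k‖) atTop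
        (𝓝 (d + 0 + 0)) := by
      refine Tendsto.add (Tendsto.add tendsto_const_nhds
        tendsto_one_div_add_atTop_nhds_zero_nat) ?_
      have : Tendsto (fun k => z - y k) atTop (𝓝 (z - z)) :=
        tendsto_const_nhds.sub hz
      rw [sub_self] at this
      simpa using this.norm
    rw [add_zero, add_zero] at htz
    refine le_of_tendsto_of_tendsto' (f := fun _ : ℕ => r z) tendsto_const_nhds htz fun k => ?_
    calc r z ≤ r (y k) + ‖z - y k‖ := hlip_r z (y k)
      _ ≤ d + 1 / (k + 1 : ℝ) + ‖z - y k‖ := by linarith [hy k]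
  have hrz : r z = d := le_antisymm hrz_le (hd_le z hzC)
  -- Step 7: z is a fixed point
  refine ⟨z, hzC, ?_⟩
  by_contra hUz
  have hpos : 0 < ‖U z - z‖ := norm_pos_iff.mpr (sub_ne_zero.mpr hUz)
  obtain ⟨η, hη, huniq⟩ := uniq _ hpos
  have h1 : r (U z) ≤ d + η := le_trans (le_trans (hrU z hzC) hrz.le) (by linarith)
  have h2 : r z ≤ d + η := by rw [hrz]; linarith
  exact absurd (huniq _ (hmaps hzC) _ hzC h1 h2) (lt_irrefl _)
end

section
/- Fix a kernel vector Â ∈ ℝⁿ with ∑_j |ŵ_{ij} Â_j| > 0 for each i, and define for greyness vectors x ∈ ℝⁿ the map F(x)_i = Â'_i · ∑_j max(w_{ij}°, x_j) m_{ij}, where m_{ij} = |ŵ_{ij} Â_j| / ∑_k |ŵ_{ik} Â_k| and Â'_i = 1/(1+exp(-λ ∑_j ŵ_{ij} Â_j)). Then for all x, y ∈ ℝⁿ, ‖F(x) - F(y)‖₂ ≤ (∑_{i,j} (Â'_i m_{ij})²)^{1/2} · ‖x - y‖₂; in particular if (∑_{i,j} (Â'_i m_{ij})²)^{1/2} < 1,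 F is a contraction and has a unique fixed point. -/
/-! Each coordinate of `F x - F y` is a weighted sum of the differences `max c (x j) - max c (y j)`,
which are dominated by `|x j - y j|` because `t ↦ max c t` is 1-Lipschitz. Cauchy–Schwarz row by row
and summing over the rows bounds the Lipschitz constant of `F` for the Euclidean norm by the
Frobenius norm of the weight matrix `Â'_i m_{ij}`; when that is `< 1`, Banach's fixed point theorem
applies. -/

open Finset

section
variable {ι κ : Type*} [Fintype ι] [Fintype κ]

theorem sq_sum_mul_le_of_abs_le (a u v : κ → ℝ) (huv : ∀ j, |u j| ≤ |v j|) :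
    (∑ j, a j * u j) ^ 2 ≤ (∑ j, a j ^ 2) * ∑ j, v j ^ 2 :=
  calc (∑ j, a j * u j) ^ 2 ≤ (∑ j, a j ^ 2) * ∑ j, u j ^ 2 := sum_mul_sq_le_sq_mul_sq _ _ _
    _ ≤ (∑ j, a j ^ 2) * ∑ j, v j ^ 2 :=
      mul_le_mul_of_nonneg_left (sum_le_sum fun j _ => sq_le_sq.mpr (huv j)) (by positivity)

theorem sqrt_sum_sq_sub_weighted_sum_le (W : ι → κ → ℝ) (g : ι → κ → ℝ → ℝ)
    (hg : ∀ i j, LipschitzWith 1 (g i j)) (x y : κ → ℝ) :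
    √(∑ i, (∑ j, W i j * g i j (x j) - ∑ j, W i j * g i j (y j)) ^ 2) ≤
      √(∑ i, ∑ j, W i j ^ 2) * √(∑ j, (x j - y j) ^ 2) := by
  rw [← Real.sqrt_mul (by positivity), sum_mul]
  gcongr with i
  rw [← sum_sub_distrib]
  simp only [← mul_sub]
  refine sq_sum_mul_le_of_abs_le _ _ _ fun j => ?_
  simpa [Real.dist_eq] using (hg i j).dist_le_mul (x j) (y j)

theorem existsUnique_fixedPoint_of_sqrt_sum_sq_sub_le (G : (κ → ℝ) → κ → ℝ) {K : ℝ} (hK : K < 1)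
    (hG : ∀ x y, √(∑ i, (G x i - G y i) ^ 2) ≤ K * √(∑ j, (x j - y j) ^ 2)) :
    ∃! x, G x = x := by
  let G₂ : EuclideanSpace ℝ κ → EuclideanSpace ℝ κ := fun x => WithLp.toLp 2 (G x)
  have hG₂ : ContractingWith K.toNNReal G₂ := by
    refine ⟨by simpa using hK, lipschitzWith_iff_dist_le_mul.mpr fun x y => ?_⟩
    simp only [EuclideanSpace.dist_eq, Real.dist_eq, sq_abs]
    exact (hG x y).trans (by gcongr; exact Real.le_coe_toNNReal K)
  refine ⟨(ContractingWith.fixedPoint G₂ hG₂).ofLp,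
    congrArg WithLp.ofLp hG₂.fixedPoint_isFixedPt, fun x hx => ?_⟩
  exact congrArg WithLp.ofLp (hG₂.fixedPoint_unique (x := WithLp.toLp 2 x) (congrArg _ hx))

end

theorem fggcm_greyness_contraction_general (n : ℕ)
    (wgrey : Matrix (Fin n) (Fin n) ℝ)
    (m : Matrix (Fin n) (Fin n) ℝ)
    (Ahat' : Fin n → ℝ)
    (F : (Fin n → ℝ) → (Fin n → ℝ))
    (hF : ∀ x i, F x i = Ahat' i * ∑ j, max (wgrey i j) (x j) * m i j) :
    (∀ x y : Fin n → ℝ,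
      Real.sqrt (∑ i, (F x i - F y i) ^ 2) ≤
        Real.sqrt (∑ i, ∑ j, (Ahat' i * m i j) ^ 2) *
          Real.sqrt (∑ j, (x j - y j) ^ 2)) ∧
    (Real.sqrt (∑ i, ∑ j, (Ahat' i * m i j) ^ 2) < 1 →
      ∃! x : Fin n → ℝ, F x = x) := by
  have hF' : ∀ x i, F x i = ∑ j, (Ahat' i * m i j) * max (wgrey i j) (x j) := by
    intro x i
    rw [hF, mul_sum]
    exact sum_congr rfl fun j _ => by ring
  have hLip : ∀ x y : Fin n → ℝ, √(∑ i, (F x i - F y i) ^ 2) ≤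
      √(∑ i, ∑ j, (Ahat' i * m i j) ^ 2) * √(∑ j, (x j - y j) ^ 2) := by
    intro x y
    simp only [hF']
    exact sqrt_sum_sq_sub_weighted_sum_le _ _ (fun i j => LipschitzWith.id.const_max _) x y
  exact ⟨hLip, fun hK => existsUnique_fixedPoint_of_sqrt_sum_sq_sub_le F hK hLip⟩

theorem fggcm_greyness_contraction (n : ℕ) (l : ℝ) (hl : 0 < l)
    (what : Matrix (Fin n) (Fin n) ℝ) (wgrey : Matrix (Fin n) (Fin n) ℝ)
    (Ahat : Fin n → ℝ) (hpos : ∀ i, 0 < ∑ j, |what i j * Ahat j|)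
    (m : Matrix (Fin n) (Fin n) ℝ)
    (hm : ∀ i j, m i j = |what i j * Ahat j| / ∑ k, |what i k * Ahat k|)
    (Ahat' : Fin n → ℝ)
    (hAhat' : ∀ i, Ahat' i = 1 / (1 + Real.exp (-l * ∑ j, what i j * Ahat j)))
    (F : (Fin n → ℝ) → (Fin n → ℝ))
    (hF : ∀ x i, F x i = Ahat' i * ∑ j, max (wgrey i j) (x j) * m i j) :
    (∀ x y : Fin n → ℝ,
      Real.sqrt (∑ i, (F x i - F y i) ^ 2) ≤
        Real.sqrt (∑ i, ∑ j, (Ahat' i * m i j) ^ 2) *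
          Real.sqrt (∑ j, (x j - y j) ^ 2)) ∧
    (Real.sqrt (∑ i, ∑ j, (Ahat' i * m i j) ^ 2) < 1 →
      ∃! x : Fin n → ℝ, F x = x) :=
  fggcm_greyness_contraction_general n wgrey m Ahat' F hF
end
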